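/- arXiv:1401.5457 — 2 statements merged into one kernel-verified Lean document; each statement's English description precedes it below -/
import Mathlib

section
/- Let $(X,\mu)$ be a measure space, $q \in (1,\infty)$ with conjugate exponent $q'$, $A \ge 1$, and let $F \subset X$ be measurable with $0 < \mu(F) < \infty$. Suppose $b : X \to \mathbb{R}$ satisfies $\int_F b\,d\mu = \mu(F)$ and $\int_F |b|^q\,d\mu \le A\,\mu(F)$. If $\{Q_i\}_i$ is a countable family of pairwise disjoint measurable subsets of $F$ such that $|\mu(Q_i)^{-1}\int_{Q_i} b\,d\mu| < 1/2$ for every $i$ (with $\mu(Q_i)>0$), then $\mu(\bigcup_i Q_i) \le (1 - A/(2A)^{q'})\,\mu(F)$. -/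
/-!
Split `F` into `G = ⋃ Q i` and `D = F \ G`. The small averages give `∫_G b ≤ μ(G)/2 ≤ μ(F)/2`,
so `∫_D b ≥ μ(F)/2`, while Hölder bounds `∫_D b` by `(A μ(F))^{1/q} μ(D)^{1/q'}`. Solving for
`μ(D)` gives `μ(D) ≥ A/(2A)^{q'} μ(F)`, and `μ(G) = μ(F) - μ(D)`.
-/

open MeasureTheory

namespace MeasureTheory

variable {X : Type*} [MeasurableSpace X] {μ : Measure X} {f : X → ℝ}

/-- For `μ s = 0` the average is junk (`0⁻¹ = 0`), but then the integral vanishes as well. -/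
theorem abs_setIntegral_le_of_abs_average_le {s : Set X} (hs : μ s ≠ ⊤) {c : ℝ}
    (h : |(μ s).toReal⁻¹ * ∫ x in s, f x ∂μ| ≤ c) :
    |∫ x in s, f x ∂μ| ≤ c * μ.real s := by
  rcases (ENNReal.toReal_nonneg (a := μ s)).eq_or_lt with h0 | hpos
  · have hs0 : μ s = 0 := (ENNReal.toReal_eq_zero_iff _).1 h0.symm |>.resolve_right hs
    simp [setIntegral_measure_zero _ hs0, measureReal_def, hs0]
  · rw [abs_mul, abs_of_pos (inv_pos.2 hpos), inv_mul_le_iff₀ hpos] at h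
    rw [measureReal_def]
    linarith

theorem setIntegral_iUnion_le_of_abs_average_le {ι : Type*} [Countable ι] {s : ι → Set X}
    (hsm : ∀ i, MeasurableSet (s i))
    (hsd : Pairwise (Function.onFun Disjoint s)) (hfin : μ (⋃ i, s i) ≠ ⊤)
    (hf : IntegrableOn f (⋃ i, s i) μ) {c : ℝ}
    (h : ∀ i, |(μ (s i)).toReal⁻¹ * ∫ x in s i, f x ∂μ| ≤ c) :
    ∫ x in ⋃ i, s i, f x ∂μ ≤ c * μ.real (⋃ i, s i) := by
  have hconst : IntegrableOn (fun _ => c) (⋃ i, s i) μ := integrableOn_const hfin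
  have hle : ∀ i, ∫ x in s i, f x ∂μ ≤ ∫ _ in s i, c ∂μ := fun i => by
    have hsi : μ (s i) ≠ ⊤ := measure_ne_top_of_subset (Set.subset_iUnion s i) hfin
    rw [setIntegral_const, smul_eq_mul, mul_comm]
    exact (le_abs_self _).trans (abs_setIntegral_le_of_abs_average_le hsi (h i))
  calc ∫ x in ⋃ i, s i, f x ∂μ ≤ ∫ _ in ⋃ i, s i, c ∂μ :=
        hasSum_le hle (hasSum_integral_iUnion hsm hsd hf) (hasSum_integral_iUnion hsm hsd hconst)
    _ = c * μ.real (⋃ i, s i) := by rw [setIntegral_const, smul_eq_mul, mul_comm]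

theorem setIntegral_abs_le_of_holderConjugate {p q : ℝ} (hpq : p.HolderConjugate q) {s : Set X}
    (hs : μ s ≠ ⊤) (hf : AEStronglyMeasurable f (μ.restrict s))
    (hfp : IntegrableOn (fun x => |f x| ^ p) s μ) :
    ∫ x in s, |f x| ∂μ ≤ (∫ x in s, |f x| ^ p ∂μ) ^ (1 / p) * μ.real s ^ (1 / q) := by
  have : IsFiniteMeasure (μ.restrict s) := isFiniteMeasure_restrict.2 hs
  have hp0 : ENNReal.ofReal p ≠ 0 := by simp [hpq.pos]
  have hmem : MemLp f (ENNReal.ofReal p) (μ.restrict s) := by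
    rw [← memLp_norm_rpow_iff hf hp0 ENNReal.ofReal_ne_top,
      ENNReal.div_self hp0 ENNReal.ofReal_ne_top, ENNReal.toReal_ofReal hpq.nonneg,
      memLp_one_iff_integrable]
    simpa [Real.norm_eq_abs, IntegrableOn] using hfp
  simpa [Measure.restrict_apply_univ, measureReal_def] using
    integral_mul_le_Lp_mul_Lq_of_nonneg hpq (.of_forall fun x => abs_nonneg (f x))
      (.of_forall fun _ => zero_le_one) hmem.abs (memLp_const (1 : ℝ))

end MeasureTheory

theorem le_of_div_le_rpow_mul_rpow {q q' A c m d : ℝ} (hpq : q.HolderConjugate q')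
    (hA : 0 < A) (hc : 0 < c) (hm : 0 < m) (hd : 0 ≤ d)
    (h : m / c ≤ (A * m) ^ (1 / q) * d ^ (1 / q')) :
    A / (c * A) ^ q' * m ≤ d := by
  have hAm : 0 < A * m := mul_pos hA hm
  have hpow : ((A * m) ^ (1 / q) * d ^ (1 / q')) ^ q' = (A * m) ^ (q' - 1) * d := by
    rw [Real.mul_rpow (by positivity) (by positivity), ← Real.rpow_mul hAm.le,
      ← Real.rpow_mul hd, one_div_mul_cancel hpq.symm.ne_zero, Real.rpow_one,
      one_div_mul_eq_div, hpq.symm.div_conj_eq_sub_one]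
  have hraised : (m / c) ^ q' ≤ (A * m) ^ (q' - 1) * d :=
    hpow ▸ Real.rpow_le_rpow (by positivity) h hpq.symm.nonneg
  have hident : (m / c) ^ q' = A / (c * A) ^ q' * m * (A * m) ^ (q' - 1) := by
    rw [Real.div_rpow hm.le hc.le, Real.mul_rpow hc.le hA.le, Real.mul_rpow hA.le hm.le,
      Real.rpow_sub hA, Real.rpow_sub hm, Real.rpow_one, Real.rpow_one]
    field_simp
  rw [hident, mul_comm _ d] at hraised
  exact le_of_mul_le_mul_right hraised (by positivity)

theorem stmt_0_general {X : Type*} [MeasurableSpace X] (μ : Measure X)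
    (q q' A : ℝ) (hq : 1 < q) (hq' : q' = q / (q - 1)) (hA : 1 ≤ A)
    (F : Set X) (hF0 : 0 < μ F) (hFfin : μ F ≠ ⊤)
    (b : X → ℝ) (hbint : IntegrableOn b F μ)
    (hbq : IntegrableOn (fun x => |b x| ^ q) F μ)
    (hmean : ∫ x in F, b x ∂μ = (μ F).toReal)
    (hLq : ∫ x in F, |b x| ^ q ∂μ ≤ A * (μ F).toReal)
    (Q : ℕ → Set X) (hQm : ∀ i, MeasurableSet (Q i))
    (hQF : ∀ i, Q i ⊆ F) (hQd : Pairwise (Function.onFun Disjoint Q))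
    (hsmall : ∀ i, |(μ (Q i)).toReal⁻¹ * ∫ x in Q i, b x ∂μ| < 1 / 2) :
    (μ (⋃ i, Q i)).toReal ≤ (1 - A / (2 * A) ^ q') * (μ F).toReal := by
  have hpq : q.HolderConjugate q' := (Real.holderConjugate_iff_eq_conjExponent hq).2 hq'
  set G := ⋃ i, Q i
  have hGF : G ⊆ F := Set.iUnion_subset hQF
  have hGm : MeasurableSet G := .iUnion hQm
  simp only [← measureReal_def] at hmean hLq ⊢
  have hF : 0 < μ.real F := ENNReal.toReal_pos hF0.ne' hFfin
  have hGint : ∫ x in G, b x ∂μ ≤ 1 / 2 * μ.real G :=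
    setIntegral_iUnion_le_of_abs_average_le hQm hQd (measure_ne_top_of_subset hGF hFfin)
      (hbint.mono_set hGF) fun i => (hsmall i).le
  have hDint : ∫ x in F \ G, b x ∂μ ≤ (A * μ.real F) ^ (1 / q) * μ.real (F \ G) ^ (1 / q') :=
    calc ∫ x in F \ G, b x ∂μ ≤ ∫ x in F \ G, |b x| ∂μ :=
          (le_abs_self _).trans abs_integral_le_integral_abs
      _ ≤ (∫ x in F \ G, |b x| ^ q ∂μ) ^ (1 / q) * μ.real (F \ G) ^ (1 / q') :=
        setIntegral_abs_le_of_holderConjugate hpq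
          (measure_ne_top_of_subset Set.sdiff_subset hFfin)
          (hbint.mono_set Set.sdiff_subset).aestronglyMeasurable (hbq.mono_set Set.sdiff_subset)
      _ ≤ (A * μ.real F) ^ (1 / q) * μ.real (F \ G) ^ (1 / q') := by
        gcongr
        exact hLq.trans' (setIntegral_mono_set hbq (.of_forall fun x => by positivity)
          (.of_forall Set.sdiff_subset))
  have hsplit : ∫ x in F, b x ∂μ = ∫ x in F \ G, b x ∂μ + ∫ x in G, b x ∂μ := by
    rw [setIntegral_sdiff hGm hbint hGF, sub_add_cancel]
  have hGF_real : μ.real G ≤ μ.real F := measureReal_mono hGF hFfin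
  have hD : A / (2 * A) ^ q' * μ.real F ≤ μ.real (F \ G) :=
    le_of_div_le_rpow_mul_rpow hpq (by linarith) two_pos hF measureReal_nonneg (by linarith)
  rw [measureReal_sdiff hGF hGm hFfin] at hD
  linarith

/-- Stopping-time estimate for the first (non-accretivity) stopping condition.
If `∫_F b dμ = μ(F)`, `∫_F |b|^q dμ ≤ A μ(F)` and `{Q_i}` are pairwise disjoint
measurable subsets of `F` of positive measure with `|⟨b⟩_{Q_i}| < 1/2`, then
`μ(⋃ Q_i) ≤ (1 - A/(2A)^{q'}) μ(F)`. -/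
theorem stmt_0 {X : Type*} [MeasurableSpace X] (μ : Measure X)
    (q q' A : ℝ) (hq : 1 < q) (hq' : q' = q / (q - 1)) (hA : 1 ≤ A)
    (F : Set X) (hF : MeasurableSet F) (hF0 : 0 < μ F) (hFfin : μ F ≠ ⊤)
    (b : X → ℝ) (hbint : IntegrableOn b F μ)
    (hbq : IntegrableOn (fun x => |b x| ^ q) F μ)
    (hmean : ∫ x in F, b x ∂μ = (μ F).toReal)
    (hLq : ∫ x in F, |b x| ^ q ∂μ ≤ A * (μ F).toReal)
    (Q : ℕ → Set X) (hQm : ∀ i, MeasurableSet (Q i))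
    (hQF : ∀ i, Q i ⊆ F) (hQd : Pairwise (Function.onFun Disjoint Q))
    (hQ0 : ∀ i, 0 < μ (Q i))
    (hsmall : ∀ i, |(μ (Q i)).toReal⁻¹ * ∫ x in Q i, b x ∂μ| < 1 / 2) :
    (μ (⋃ i, Q i)).toReal ≤ (1 - A / (2 * A) ^ q') * (μ F).toReal :=
  stmt_0_general μ q q' A hq hq' hA F hF0 hFfin b hbint hbq hmean hLq Q hQm hQF hQd hsmall
end

section
/- Let $\mu$ be a Borel measure on $\mathbb{R}^n$ with $\mu(B(x,r)) \lesssim r^m$, and let $s_t$ satisfy the Hölder condition $|s_t(x,y) - s_t(x,z)| \le C \frac{|y-z|^\alpha}{(t + |x-y|)^{m+\alpha}}$ for $|y-z| < t/2$. Let $Q, R$ be dyadic cubes with $\ell(R) = 2^\ell \ell(Q)$ for some $\ell \ge 1$, and suppose the long distance $D(Q,R) := d(Q,R) + \ell(Q) + \ell(R)$ satisfies $2^j \ell(R) \le D(Q,R) < 2^{j+1}\ell(R)$ for some $j \ge 0$. Assume $\gamma \in (0,1)$ satisfies $m\gamma/(1-\gamma) \le \alpha/4$, set $\theta(j) = \lceil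 (\gamma j + r)/(1-\gamma) \rceil$ with $r \ge 1$ a fixed integer, and let $S_0$ be a cube with $\ell(S_0) = 2^{\ell + j + \theta(j)} \ell(Q)$. Then for all $x \in R$, $y \in Q$, and $t \in (\ell(R)/2, \ell(R))$: $|s_t(x,y) - s_t(x,c_Q)| \le C' 2^{-\alpha \ell} 2^{-3\alpha j/4} \ell(S_0)^{-m}$, where $c_Q$ is the center of $Q$. -/
/-
Since `|y - c_Q| ≤ ℓ(Q)/2 ≤ ℓ(R)/4 < t/2`, the Hölder condition applies, and its denominator
`t + |x - y|` is at least `2^j ℓ(R)/4`, because `|x - y| ≥ d(Q,R) ≥ D(Q,R) - 3ℓ(R)/2`.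
This bounds the difference by `2^{-α - (j+k-2)(m+α)} ℓ(Q)^{-m}`. Passing from `ℓ(R)^{-m}` to
`ℓ(S₀)^{-m}` costs `2^{-mθ(j)}`, and `m θ(j) ≤ α j/4 + O(1)` because `m γ/(1-γ) ≤ α/4`.
-/

open MeasureTheory

/-- Distance between two sets in a pseudometric space. -/
noncomputable def setDist {E : Type*} [PseudoMetricSpace E] (A B : Set E) : ℝ :=
  sInf {d | ∃ a ∈ A, ∃ b ∈ B, d = dist a b}

/-- The axis-parallel cube with center `c` and side length `ℓ`. -/
def cube {n : ℕ} (c : Fin n → ℝ) (ℓ : ℝ) : Set (Fin n → ℝ) :=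
  {y | ∀ i, |y i - c i| ≤ ℓ / 2}

theorem setDist_le_dist {E : Type*} [PseudoMetricSpace E] {A B : Set E} {a b : E}
    (ha : a ∈ A) (hb : b ∈ B) : setDist A B ≤ dist a b :=
  csInf_le ⟨0, by rintro _ ⟨a, -, b, -, rfl⟩; exact dist_nonneg⟩ ⟨a, ha, b, hb, rfl⟩

theorem dist_le_of_mem_cube {n : ℕ} {c y : Fin n → ℝ} {ℓ : ℝ} (hℓ : 0 ≤ ℓ)
    (hy : y ∈ cube c ℓ) : dist y c ≤ ℓ / 2 :=
  (dist_pi_le_iff (by positivity)).2 fun i => (Real.dist_eq _ _).trans_le (hy i)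

theorem two_pow_mul_div_four_le_add_dist {E : Type*} [PseudoMetricSpace E] {A B : Set E}
    {x y : E} (hx : x ∈ B) (hy : y ∈ A) {a b t : ℝ} {j : ℕ} (hb : 0 ≤ b) (hab : a ≤ b / 2)
    (ht : b / 2 < t) (hD : 2 ^ j * b ≤ setDist A B + a + b) :
    2 ^ j * b / 4 ≤ t + dist x y := by
  have hAB : setDist A B ≤ dist x y := dist_comm y x ▸ setDist_le_dist hy hx
  rcases le_total ((2 : ℝ) ^ j) 2 with h | h
  · nlinarith [dist_nonneg (x := x) (y := y)]
  · nlinarith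

theorem mul_ceil_div_one_sub_le {m γ β : ℝ} (hm : 0 ≤ m) (hγ : m * γ / (1 - γ) ≤ β)
    {j : ℝ} (hj : 0 ≤ j) (r : ℝ) :
    m * ⌈(γ * j + r) / (1 - γ)⌉ ≤ β * j + m * (r / (1 - γ) + 1) := by
  have hceil := (Int.ceil_lt_add_one ((γ * j + r) / (1 - γ))).le
  calc m * ⌈(γ * j + r) / (1 - γ)⌉ ≤ m * ((γ * j + r) / (1 - γ) + 1) := by gcongr
    _ = m * γ / (1 - γ) * j + m * (r / (1 - γ) + 1) := by ring
    _ ≤ β * j + m * (r / (1 - γ) + 1) := by gcongr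

theorem two_rpow_mul_rpow {a ℓ : ℝ} (hℓ : 0 ≤ ℓ) (p : ℝ) :
    ((2 : ℝ) ^ a * ℓ) ^ p = 2 ^ (a * p) * ℓ ^ p := by
  rw [Real.mul_rpow (by positivity) hℓ, ← Real.rpow_mul zero_le_two]

theorem half_rpow_div_rpow_le {m α M ℓ : ℝ} {k j : ℕ} {θ : ℤ} (hℓ : 0 < ℓ)
    (hθ : m * θ ≤ α / 4 * j + M) :
    (ℓ / 2) ^ α / (2 ^ j * (2 ^ k * ℓ) / 4) ^ (m + α) ≤
      2 ^ (2 * m + α + M) * 2 ^ (-(α * k)) * 2 ^ (-(3 * α * j / 4)) *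
        ((2 : ℝ) ^ ((k : ℤ) + j + θ) * ℓ) ^ (-m) := by
  have hQ : ℓ / 2 = (2 : ℝ) ^ (-1 : ℝ) * ℓ := by
    rw [Real.rpow_neg_one]; ring
  have hR : (2 : ℝ) ^ j * (2 ^ k * ℓ) / 4 = (2 : ℝ) ^ ((j : ℝ) + k - 2) * ℓ := by
    rw [Real.rpow_sub two_pos, Real.rpow_add two_pos, Real.rpow_natCast, Real.rpow_natCast,
      Real.rpow_two]; ring
  have hS : (2 : ℝ) ^ ((k : ℤ) + j + θ) = (2 : ℝ) ^ ((k : ℝ) + j + θ) := by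
    rw [← Real.rpow_intCast]; push_cast; rfl
  have hℓm : ℓ ^ (-m) = ℓ ^ α / ℓ ^ (m + α) := by
    rw [← Real.rpow_sub hℓ]; ring_nf
  rw [hQ, hR, hS, two_rpow_mul_rpow hℓ.le, two_rpow_mul_rpow hℓ.le, two_rpow_mul_rpow hℓ.le,
    hℓm, ← Real.rpow_add two_pos, ← Real.rpow_add two_pos, mul_div_mul_comm,
    ← Real.rpow_sub two_pos, ← mul_assoc, ← Real.rpow_add two_pos]
  gcongr
  · norm_num
  -- the two exponents of `2` differ by `M + α j / 4 - m θ`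
  · linarith

theorem stmt_6_general (n : ℕ) (m α γ C₀ C : ℝ) (r : ℕ)
    (hm : 0 < m) (hα : 0 < α)
    (hγ : m * γ / (1 - γ) ≤ α / 4) (hC : 0 < C) :
    ∃ C' : ℝ, 0 < C' ∧
      ∀ (μ : Measure (Fin n → ℝ)) (s : ℝ → (Fin n → ℝ) → (Fin n → ℝ) → ℝ),
        (∀ (x : Fin n → ℝ) (ρ : ℝ), 0 < ρ →
          μ (Metric.ball x ρ) ≤ ENNReal.ofReal (C₀ * ρ ^ m)) →
        (∀ (t : ℝ), 0 < t → ∀ x y z : Fin n → ℝ, dist y z < t / 2 →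
          |s t x y - s t x z| ≤ C * dist y z ^ α / (t + dist x y) ^ (m + α)) →
        ∀ (cQ cR : Fin n → ℝ) (ℓQ ℓR : ℝ) (k j : ℕ),
          0 < ℓQ → 1 ≤ k → ℓR = 2 ^ k * ℓQ →
          2 ^ j * ℓR ≤ setDist (cube cQ ℓQ) (cube cR ℓR) + ℓQ + ℓR →
          setDist (cube cQ ℓQ) (cube cR ℓR) + ℓQ + ℓR < 2 ^ (j + 1) * ℓR →
          ∀ x ∈ cube cR ℓR, ∀ y ∈ cube cQ ℓQ,
            ∀ t ∈ Set.Ioo (ℓR / 2) ℓR,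
              |s t x y - s t x cQ| ≤
                C' * (2 : ℝ) ^ (-(α * k)) * (2 : ℝ) ^ (-(3 * α * j / 4)) *
                  ((2 : ℝ) ^ ((k : ℤ) + j + ⌈(γ * j + r) / (1 - γ)⌉) * ℓQ) ^ (-m) := by
  refine ⟨C * 2 ^ (2 * m + α + m * (r / (1 - γ) + 1)), by positivity, ?_⟩
  rintro μ s - hs cQ cR ℓQ ℓR k j hℓQ hk rfl hD - x hx y hy t ⟨htR, -⟩
  have hQR : ℓQ ≤ 2 ^ k * ℓQ / 2 := by
    have : (2 : ℝ) ≤ 2 ^ k := le_self_pow₀ one_le_two (by omega)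
    nlinarith
  have hyc : dist y cQ ≤ ℓQ / 2 := dist_le_of_mem_cube hℓQ.le hy
  have hxy := two_pow_mul_div_four_le_add_dist hx hy (by positivity) hQR htR hD
  have hθ := mul_ceil_div_one_sub_le hm.le hγ (Nat.cast_nonneg j) r
  calc |s t x y - s t x cQ| ≤ C * dist y cQ ^ α / (t + dist x y) ^ (m + α) :=
        hs t (by linarith [hℓQ.trans_le hQR]) x y cQ (by linarith)
    _ ≤ C * ((ℓQ / 2) ^ α / (2 ^ j * (2 ^ k * ℓQ) / 4) ^ (m + α)) := by
        rw [mul_div_assoc]; gcongr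
    _ ≤ _ := (mul_le_mul_of_nonneg_left (half_rpow_div_rpow_le hℓQ hθ) hC.le).trans_eq (by ring)

/-- Kernel Hölder estimate in the case `ℓ(Q) < ℓ(R)`: for cubes with
`ℓ(R) = 2^k ℓ(Q)` (`k ≥ 1`) and `2^j ℓ(R) ≤ D(Q,R) < 2^{j+1} ℓ(R)`, setting
`θ(j) = ⌈(γj+r)/(1-γ)⌉` and `ℓ(S₀) = 2^{k+j+θ(j)} ℓ(Q)`, one has for `x ∈ R`, `y ∈ Q`
and `t ∈ (ℓ(R)/2, ℓ(R))` that
`|s_t(x,y) - s_t(x,c_Q)| ≤ C' 2^{-αk} 2^{-3αj/4} ℓ(S₀)^{-m}`. -/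
theorem stmt_6 (n : ℕ) (m α γ C₀ C : ℝ) (r : ℕ)
    (hm : 0 < m) (hα : 0 < α) (hγ0 : 0 < γ) (hγ1 : γ < 1)
    (hγ : m * γ / (1 - γ) ≤ α / 4) (hr : 1 ≤ r) (hC₀ : 0 < C₀) (hC : 0 < C) :
    ∃ C' : ℝ, 0 < C' ∧
      ∀ (μ : Measure (Fin n → ℝ)) (s : ℝ → (Fin n → ℝ) → (Fin n → ℝ) → ℝ),
        (∀ (x : Fin n → ℝ) (ρ : ℝ), 0 < ρ →
          μ (Metric.ball x ρ) ≤ ENNReal.ofReal (C₀ * ρ ^ m)) →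
        (∀ (t : ℝ), 0 < t → ∀ x y z : Fin n → ℝ, dist y z < t / 2 →
          |s t x y - s t x z| ≤ C * dist y z ^ α / (t + dist x y) ^ (m + α)) →
        ∀ (cQ cR : Fin n → ℝ) (ℓQ ℓR : ℝ) (k j : ℕ),
          0 < ℓQ → 1 ≤ k → ℓR = 2 ^ k * ℓQ →
          2 ^ j * ℓR ≤ setDist (cube cQ ℓQ) (cube cR ℓR) + ℓQ + ℓR →
          setDist (cube cQ ℓQ) (cube cR ℓR) + ℓQ + ℓR < 2 ^ (j + 1) * ℓR →
          ∀ x ∈ cube cR ℓR, ∀ y ∈ cube cQ ℓQ,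
            ∀ t ∈ Set.Ioo (ℓR / 2) ℓR,
              |s t x y - s t x cQ| ≤
                C' * (2 : ℝ) ^ (-(α * k)) * (2 : ℝ) ^ (-(3 * α * j / 4)) *
                  ((2 : ℝ) ^ ((k : ℤ) + j + ⌈(γ * j + r) / (1 - γ)⌉) * ℓQ) ^ (-m) :=
  stmt_6_general n m α γ C₀ C r hm hα hγ hC
end
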